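/- arXiv:1909.12651 — 2 statements merged into one kernel-verified Lean document; each statement's English description precedes it below -/
import Mathlib

section
/- There exists a minmax bornology 𝓑 on ω such that 𝓑^♯ has cardinality 2^𝔠 (where 𝔠 is the cardinality of the continuum). -/
open Set

def diagS (X : Type*) : Set (X × X) := {p | p.1 = p.2}

def compS {X : Type*} (E F : Set (X × X)) : Set (X × X) :=
  {p | ∃ z, (p.1, z) ∈ E ∧ (z, p.2) ∈ F}

def invS {X : Type*} (E : Set (X × X)) : Set (X × X) := {p | (p.2, p.1) ∈ E}

def ballS {X : Type*} (E : Set (X × X)) (A : Set X) : Set X :=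
  {y | ∃ x ∈ A, (x, y) ∈ E}

/-- A coarse structure on `X`. -/
structure IsCoarse {X : Type*} (E : Set (Set (X × X))) : Prop where
  diag_sub : ∀ e ∈ E, diagS X ⊆ e
  comp_mem : ∀ e ∈ E, ∀ f ∈ E, compS e f ∈ E
  inv_mem : ∀ e ∈ E, invS e ∈ E
  subset_mem : ∀ e ∈ E, ∀ f, diagS X ⊆ f → f ⊆ e → f ∈ E
  cover : ⋃₀ E = Set.univ

/-- `B` is bounded in the coarse structure `E`. -/
def IsBoundedIn {X : Type*} (E : Set (Set (X × X))) (B : Set X) : Prop :=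
  ∃ e ∈ E, ∃ x : X, B ⊆ ballS e {x}

/-- A bornology on `X` (as a family of sets). -/
structure IsBornology {X : Type*} (B : Set (Set X)) : Prop where
  cover : ⋃₀ B = Set.univ
  univ_not_mem : Set.univ ∉ B
  subset_mem : ∀ b ∈ B, ∀ a ⊆ b, a ∈ B
  union_mem : ∀ b ∈ B, ∀ c ∈ B, b ∪ c ∈ B

/-- The coarse structure `E` is compatible with the bornology `B`. -/
def Compatible {X : Type*} (E : Set (Set (X × X))) (B : Set (Set X)) : Prop :=
  ∀ b : Set X, b ∈ B ↔ IsBoundedIn E b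

/-- The largest coarse structure compatible with `B`. -/
def upB {X : Type*} (B : Set (Set X)) : Set (Set (X × X)) :=
  {e | diagS X ⊆ e ∧ ∀ b ∈ B, ballS e b ∈ B ∧ ballS (invS e) b ∈ B}

/-- The smallest coarse structure compatible with `B`. -/
def downB {X : Type*} (B : Set (Set X)) : Set (Set (X × X)) :=
  {e | diagS X ⊆ e ∧ ∃ b ∈ B, e ⊆ (b ×ˢ b) ∪ diagS X}

/-- `B^♯`: ultrafilters containing complements of all bounded sets. -/
def sharp {X : Type*} (B : Set (Set X)) : Set (Ultrafilter X) :=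
  {p | ∀ b ∈ B, (bᶜ : Set X) ∈ p}

/-- Two ultrafilters are `B`-isomorphic. -/
def BIso {X : Type*} (B : Set (Set X)) (p q : Ultrafilter X) : Prop :=
  ∃ f : X ≃ X, Ultrafilter.map f p = q ∧ (fun b : Set X => f '' b) '' B = B

/-- Two ultrafilters are isomorphic. -/
def UIso {X : Type*} (p q : Ultrafilter X) : Prop :=
  ∃ f : X ≃ X, Ultrafilter.map f p = q

/-- A free ultrafilter. -/
def FreeU {X : Type*} (p : Ultrafilter X) : Prop := ∀ x : X, p ≠ pure x

/-- The remainder `βω ∖ ω`: the set of free ultrafilters. -/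
def remainder : Set (Ultrafilter ℕ) := {p | FreeU p}

/-- `L` is large in the coarse structure `E`. -/
def IsLarge {X : Type*} (E : Set (Set (X × X))) (L : Set X) : Prop :=
  ∃ e ∈ E, ballS e L = Set.univ

/-- An unbounded coarse space is maximal if `X` is bounded in every
strictly larger coarse structure. -/
def IsMaximalCoarse {X : Type*} (E : Set (Set (X × X))) : Prop :=
  IsCoarse E ∧ ¬ IsBoundedIn E Set.univ ∧
    ∀ E' : Set (Set (X × X)), IsCoarse E' → E ⊂ E' → IsBoundedIn E' Set.univ

/-- The coarse structure on `ℕ` induced by finitely supported permutations. -/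
def finPermCoarse : Set (Set (ℕ × ℕ)) :=
  {e | diagS ℕ ⊆ e ∧ ∃ F : Finset (Equiv.Perm ℕ),
    (∀ g ∈ F, {x | g x ≠ x}.Finite) ∧
    e ⊆ {p | p.2 = p.1 ∨ ∃ g ∈ F, p.2 = g p.1}}

/-!
The bornology consists of the sets lying in none of countably many free ultrafilters
`p n ∋ block n` on pairwise disjoint blocks. Each ultrafilter `r` gives the limit `r.bind p` in
`𝓑^♯`, and distinct `r` give distinct limits, so `|𝓑^♯| = 2 ^ 𝔠`.

For minmax it suffices that an injection `x` without fixed points on a member of some `p k` maps a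
member of `p k` to a bounded set, i.e. that `x_* p k` is not in the closure of the `p n`. It is none
of the `p n` (Katětov's theorem for `n = k`; the `p n` are pairwise non-isomorphic), so it would be
a free limit `r.bind p`. A permutation agreeing with `x` on a member of `p k` then exhibits `p k`
as a bind over disjoint blocks whose summands are, for `r`-almost all `n`, isomorphic to `p n`.
Such a decomposition is unique almost everywhere, so this is excluded by choosing each `p n`
outside the `𝔠` isomorphism classes of summands of decompositions of the earlier `p m`; there
are `2 ^ 𝔠` candidates by Pospíšil's theorem.
-/

open Topology Function
open scoped Filter Cardinal

namespace Ultrafilter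

variable {α β ι : Type*}

theorem mem_bind {u : Ultrafilter ι} {m : ι → Ultrafilter α} {s : Set α} :
    s ∈ u.bind m ↔ {i | s ∈ m i} ∈ u :=
  Iff.rfl

theorem pure_bind (i : ι) (m : ι → Ultrafilter α) : (pure i : Ultrafilter ι).bind m = m i := by
  ext s
  rfl

theorem map_bind (f : α → β) (u : Ultrafilter ι) (m : ι → Ultrafilter α) :
    map f (u.bind m) = u.bind fun i => map f (m i) := by
  ext s
  rfl

theorem map_congr {u : Ultrafilter α} {f g : α → β} (h : ∀ᶠ a in u, f a = g a) :
    map f u = map g u :=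
  coe_injective (Filter.map_congr h)

theorem map_injective {f : α → β} (hf : Function.Injective f) :
    Function.Injective (map f : Ultrafilter α → Ultrafilter β) := fun _ _ h =>
  coe_injective (Filter.map_injective hf (congrArg toFilter h))

theorem map_le_cofinite {f : α → β} (hf : Function.Injective f) {u : Ultrafilter α}
    (hu : (u : Filter α) ≤ Filter.cofinite) : (map f u : Filter β) ≤ Filter.cofinite :=
  (Filter.map_mono hu).trans hf.tendsto_cofinite

theorem iUnion_inter_mem_iff {D : ι → Set α} (hD : Pairwise (Disjoint on D)) {v : Ultrafilter α}
    {i : ι} (hi : D i ∈ v) (V : ι → Set α) : (⋃ j, V j ∩ D j) ∈ v ↔ V i ∈ v := by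
  have hblock : (⋃ j, V j ∩ D j) ∩ D i = V i ∩ D i := by
    ext a
    simp only [mem_inter_iff, mem_iUnion]
    refine ⟨fun ⟨⟨j, haV, haj⟩, hai⟩ => ?_, fun ⟨haV, hai⟩ => ⟨⟨i, haV, hai⟩, hai⟩⟩
    obtain rfl : j = i := by_contra fun hji => Set.disjoint_left.1 (hD hji) haj hai
    exact ⟨haV, hai⟩
  have hrestrict : ∀ A : Set α, A ∩ D i ∈ v ↔ A ∈ v := fun A => by
    rw [← mem_coe, Filter.inter_mem_iff]; exact and_iff_left hi
  rw [← hrestrict, hblock, hrestrict]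

theorem iUnion_inter_mem_bind_iff {D : ι → Set α} (hD : Pairwise (Disjoint on D))
    {s : Ultrafilter ι} {c : ι → Ultrafilter α} (hc : ∀ᶠ i in s, D i ∈ c i) (V : ι → Set α) :
    (⋃ j, V j ∩ D j) ∈ s.bind c ↔ ∀ᶠ i in s, V i ∈ c i :=
  Filter.eventually_congr (hc.mono fun _ hi => iUnion_inter_mem_iff hD hi V)

theorem eq_and_eventually_eq_of_bind_eq {D : ι → Set α} (hD : Pairwise (Disjoint on D))
    {s s' : Ultrafilter ι} {c c' : ι → Ultrafilter α} (hc : ∀ᶠ i in s, D i ∈ c i)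
    (hc' : ∀ᶠ i in s', D i ∈ c' i) (h : s.bind c = s'.bind c') :
    s = s' ∧ ∀ᶠ i in s, c i = c' i := by
  have hs : s = s' := by
    ext N
    have key : ∀ {t : Ultrafilter ι} {d : ι → Ultrafilter α}, (∀ᶠ i in t, D i ∈ d i) →
        (N ∈ t ↔ (⋃ j, {_a : α | j ∈ N} ∩ D j) ∈ t.bind d) := fun hd => by
      rw [iUnion_inter_mem_bind_iff hD hd]
      exact (Filter.eventually_congr (.of_forall fun _ => Filter.eventually_const)).symm
    rw [key hc, key hc', h]
  subst hs
  refine ⟨rfl, ?_⟩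
  by_contra hne
  rw [← frequently_iff_eventually.not, Filter.not_frequently] at hne
  have hV : ∀ i, c i ≠ c' i → ∃ V, V ∈ c i ∧ V ∉ c' i := fun i hi => by
    by_contra! hall
    exact hi (eq_of_le hall).symm
  choose! V hV using hV
  have hmem : ∀ᶠ i in s, V i ∈ c i := hne.mono fun i hi => (hV i hi).1
  have hnot : ∀ᶠ i in s, V i ∉ c' i := hne.mono fun i hi => (hV i hi).2
  have := (iUnion_inter_mem_bind_iff hD hc' V).1 (h ▸ (iUnion_inter_mem_bind_iff hD hc V).2 hmem)
  exact (this.and hnot).exists.elim fun i hi => hi.2 hi.1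

theorem bind_injective {D : ι → Set α} (hD : Pairwise (Disjoint on D)) {c : ι → Ultrafilter α}
    (hc : ∀ i, D i ∈ c i) : Function.Injective fun s : Ultrafilter ι => s.bind c :=
  fun _ _ h => (eq_and_eventually_eq_of_bind_eq hD (.of_forall hc) (.of_forall hc) h).1

/-- `r` is any ultrafilter finer than the pull-back along `p` of the Stone–Čech neighbourhoods
of `v`. -/
theorem exists_bind_eq_of_forall_mem {p : ι → Ultrafilter α} {v : Ultrafilter α}
    (h : ∀ A ∈ v, ∃ i, A ∈ p i) : ∃ r : Ultrafilter ι, r.bind p = v := by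
  set F : Filter ι := Filter.comap p (𝓝 v)
  have : F.NeBot := Filter.comap_neBot_iff.2 fun t ht => by
    obtain ⟨_, ⟨A, rfl⟩, hA, hAt⟩ := ultrafilterBasis_is_basis.mem_nhds_iff.1 ht
    obtain ⟨i, hi⟩ := h A hA
    exact ⟨i, hAt hi⟩
  exact ⟨.of F, eq_of_le fun A hA =>
    of_le _ (Filter.preimage_mem_comap ((ultrafilter_isOpen_basic A).mem_nhds hA))⟩

theorem exists_free_bind_eq_of_forall_mem {p : ι → Ultrafilter α} {v : Ultrafilter α}
    (h : ∀ A ∈ v, ∃ i, A ∈ p i) (hne : ∀ i, p i ≠ v) :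
    ∃ r : Ultrafilter ι, (r : Filter ι) ≤ Filter.cofinite ∧ r.bind p = v := by
  obtain ⟨r, rfl⟩ := exists_bind_eq_of_forall_mem h
  refine ⟨r, (le_cofinite_or_eq_pure r).resolve_right ?_, rfl⟩
  rintro ⟨i, rfl⟩
  exact hne i (pure_bind i p).symm

theorem mk_le : #(Ultrafilter α) ≤ (2 : Cardinal) ^ (2 : Cardinal) ^ #α := by
  rw [← Cardinal.mk_set, ← Cardinal.mk_set]
  exact Cardinal.mk_le_of_injective (f := fun u : Ultrafilter α => (u : Filter α).sets)
    fun _ _ h => coe_injective (Filter.filter_eq h)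

end Ultrafilter

def descentLength (x : ℕ → ℕ) (n : ℕ) : ℕ :=
  if h : x n < n then descentLength x (x n) + 1 else 0
termination_by n

theorem descentLength_of_lt {x : ℕ → ℕ} {n : ℕ} (h : x n < n) :
    descentLength x n = descentLength x (x n) + 1 := by
  rw [descentLength, dif_pos h]

namespace Ultrafilter

/-- Where `x` descends, `n` and `x n` have descent lengths of different parity. -/
theorem map_ne_self_of_eventually_lt {u : Ultrafilter ℕ} {x : ℕ → ℕ} (hx : ∀ᶠ n in u, x n < n) :
    map x u ≠ u := by
  intro hxu
  set E := {n | Even (descentLength x n)}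
  have hflip : x ⁻¹' E ∈ u ↔ Eᶜ ∈ u := Filter.eventually_congr <| hx.mono fun n hn => by
    simp [E, descentLength_of_lt hn, Nat.even_add_one]
  rw [← mem_map, hxu, compl_mem_iff_notMem] at hflip
  exact iff_not_self hflip

/-- Katětov's theorem, for injective maps: on ascending points, apply the descending case to a
left inverse of `x`. -/
theorem map_ne_self_of_injOn {u : Ultrafilter ℕ} {x : ℕ → ℕ} {W : Set ℕ} (hW : W ∈ u)
    (hinj : InjOn x W) (hfix : ∀ n ∈ W, x n ≠ n) : map x u ≠ u := by
  intro hxu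
  have : ∀ᶠ n in u, x n < n ∨ n < x n := Filter.mem_of_superset hW fun n hn => (hfix n hn).lt_or_gt
  rcases eventually_or.1 this with hlt | hgt
  · exact map_ne_self_of_eventually_lt hlt hxu
  set y := Function.invFunOn x W
  have hyx : ∀ᶠ n in u, y (x n) = n :=
    Filter.mem_of_superset hW fun n hn => hinj.leftInvOn_invFunOn hn
  refine map_ne_self_of_eventually_lt (u := u) (x := y) ?_ ?_
  · rw [← hxu, coe_map, Filter.eventually_map]
    exact (hyx.and hgt).mono fun n hn => by rw [hn.1]; exact hn.2
  · calc map y u = map (y ∘ x) u := by rw [← map_map, hxu]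
      _ = map id u := map_congr hyx
      _ = u := map_id u

theorem exists_mem_infinite_compl (u : Ultrafilter ℕ) : ∃ P ∈ u, Pᶜ.Infinite := by
  have heven : {n : ℕ | Even n}.Infinite :=
    infinite_of_forall_exists_gt fun a => ⟨2 * a + 2, ⟨a + 1, by ring⟩, by omega⟩
  have hodd : {n : ℕ | Even n}ᶜ.Infinite :=
    infinite_of_forall_exists_gt fun a => ⟨2 * a + 1, by simp, by omega⟩
  rcases u.mem_or_compl_mem {n | Even n} with h | h
  · exact ⟨_, h, hodd⟩
  · exact ⟨_, h, by rwa [compl_compl]⟩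

/-- Shrink the member so that both it and its image have infinite complements; then
`Cardinal.extend_function` applies. -/
theorem exists_perm_eventually_eq {u : Ultrafilter ℕ} {x : ℕ → ℕ} {W : Set ℕ} (hW : W ∈ u)
    (hinj : InjOn x W) : ∃ σ : Equiv.Perm ℕ, ∀ᶠ n in u, σ n = x n := by
  obtain ⟨P, hP, hPc⟩ := exists_mem_infinite_compl u
  obtain ⟨Q, hQ, hQc⟩ := exists_mem_infinite_compl (map x u)
  set Z := W ∩ P ∩ x ⁻¹' Q
  have hZ : Z ∈ u := Filter.inter_mem (Filter.inter_mem hW hP) hQ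
  let f : Z ↪ ℕ := ⟨Z.domRestrict x, (hinj.mono fun _ h => h.1.1).injective⟩
  have : Infinite ↥Zᶜ := (hPc.mono (compl_subset_compl.2 fun _ hz => hz.1.2)).to_subtype
  have hfQ : range f ⊆ Q := by
    rintro _ ⟨z, rfl⟩
    exact z.2.2
  have : Infinite ↥(range f)ᶜ := (hQc.mono (compl_subset_compl.2 hfQ)).to_subtype
  obtain ⟨σ, hσ⟩ := Cardinal.extend_function f nonempty_equiv_of_countable
  exact ⟨σ, Filter.mem_of_superset hZ fun n hn => hσ ⟨n, hn⟩⟩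

end Ultrafilter

theorem UIso.symm {p q : Ultrafilter ℕ} (h : UIso p q) : UIso q p := by
  obtain ⟨f, rfl⟩ := h
  exact ⟨f.symm, by rw [Ultrafilter.map_map, f.symm_comp_self, Ultrafilter.map_id]⟩

section IndependentFamily

variable {α : Type*}

/-- Hausdorff's independent family, on codes `(F, 𝒜)` with `F` finite and `𝒜` a finite family of
finite sets, which `#α` codes suffice to enumerate. -/
def indepFamily (W : Set α) : Set (Finset α × Finset (Finset α)) :=
  {x | ∃ G ∈ x.2, (G : Set α) = ↑x.1 ∩ W}

def indepPattern (𝒮 : Set (Set α)) (W : Set α) : Set (Finset α × Finset (Finset α)) :=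
  {x | x ∈ indepFamily W ↔ W ∈ 𝒮}

theorem exists_finset_separating {T : Set (Set α)} (hT : T.Finite) :
    ∃ F₀ : Finset α, ∀ F : Finset α, F₀ ⊆ F → ∀ W ∈ T, ∀ W' ∈ T, ↑F ∩ W = ↑F ∩ W' → W = W' := by
  classical
  have hsep : ∀ q : Set α × Set α, ∃ F : Finset α, q.1 ≠ q.2 → ↑F ∩ q.1 ≠ ↑F ∩ q.2 := by
    rintro ⟨W, W'⟩
    by_cases h : W = W'
    · exact ⟨∅, fun h' => absurd h h'⟩
    obtain ⟨a, ha⟩ : ∃ a, ¬(a ∈ W ↔ a ∈ W') := by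
      by_contra! hall
      exact h (Set.ext hall)
    refine ⟨{a}, fun _ heq => ha ?_⟩
    simpa using Set.ext_iff.1 heq a
  choose sep hsep using hsep
  refine ⟨(hT.prod hT).toFinset.biUnion sep, fun F hF W hW W' hW' heq => by_contra fun hne => ?_⟩
  have hsub : (sep (W, W') : Set α) ⊆ F := fun a ha =>
    hF (Finset.mem_biUnion.2 ⟨(W, W'), (hT.prod hT).mem_toFinset.2 ⟨hW, hW'⟩, ha⟩)
  apply hsep (W, W') hne
  rw [← inter_eq_right.2 hsub, inter_right_comm, heq, inter_right_comm]

variable [Infinite α]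

theorem infinite_iInter_indepPattern (𝒮 : Set (Set α)) {T : Set (Set α)} (hT : T.Finite) :
    (⋂ W ∈ T, indepPattern 𝒮 W).Infinite := by
  classical
  obtain ⟨F₀, hF₀⟩ := exists_finset_separating hT
  let code (F : Finset α) : Finset α × Finset (Finset α) :=
    (F, ((hT.inter_of_left 𝒮).toFinset.image fun W => {a ∈ F | a ∈ W}))
  have hcode : ∀ F, F₀ ⊆ F → code F ∈ ⋂ W ∈ T, indepPattern 𝒮 W := by
    intro F hF
    simp only [mem_iInter₂, indepPattern, indepFamily, mem_ofPred_eq, code, Finset.mem_image,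
      Finite.mem_toFinset]
    intro W hW
    constructor
    · rintro ⟨_, ⟨W', ⟨hW'T, hW'𝒮⟩, rfl⟩, htrace⟩
      rw [hF₀ F hF W hW W' hW'T (by simpa [Set.ext_iff] using htrace.symm)]
      exact hW'𝒮
    · intro hW𝒮
      exact ⟨_, ⟨W, ⟨hW, hW𝒮⟩, rfl⟩, by ext; simp⟩
  refine infinite_of_injOn_mapsTo (s := (↑F₀ : Set α)ᶜ) (f := fun a => code (insert a F₀))
    (fun a ha b hb hab => ?_) (fun a _ => hcode _ (Finset.subset_insert a F₀))
    F₀.finite_toSet.infinite_compl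
  have hins : insert a F₀ = insert b F₀ := congrArg Prod.fst hab
  have : a ∈ insert b F₀ := hins ▸ Finset.mem_insert_self a F₀
  exact (Finset.mem_insert.1 this).resolve_right ha

def indepFilter (𝒮 : Set (Set α)) : Filter (Finset α × Finset (Finset α)) :=
  Filter.cofinite ⊓ ⨅ W, 𝓟 (indepPattern 𝒮 W)

instance (𝒮 : Set (Set α)) : (indepFilter 𝒮).NeBot := by
  refine Filter.inf_neBot_iff.2 fun s hs s' hs' => ?_
  obtain ⟨T, hT, hTs'⟩ := (Filter.hasBasis_iInf_principal_finite _).mem_iff.1 hs'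
  obtain ⟨x, hxT, hxs⟩ := ((infinite_iInter_indepPattern 𝒮 hT).sdiff hs).nonempty
  exact ⟨x, not_not.1 hxs, hTs' hxT⟩

end IndependentFamily

namespace Ultrafilter

theorem two_power_two_power_le_mk_free (α : Type*) [Infinite α] :
    (2 : Cardinal) ^ (2 : Cardinal) ^ #α ≤
      #{u : Ultrafilter α // (u : Filter α) ≤ Filter.cofinite} := by
  let X := Finset α × Finset (Finset α)
  have hX : #X = #α := by
    simp only [X, Cardinal.mk_prod, Cardinal.lift_id, Cardinal.mk_finset_of_infinite]
    exact Cardinal.mul_eq_self (Cardinal.aleph0_le_mk α)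
  obtain ⟨e⟩ := Cardinal.eq.1 hX
  let u (𝒮 : Set (Set α)) : Ultrafilter X := .of (indepFilter 𝒮)
  have hu_free (𝒮) : (u 𝒮 : Filter X) ≤ Filter.cofinite := (of_le (indepFilter 𝒮)).trans inf_le_left
  have hu_mem (𝒮 W) : indepPattern 𝒮 W ∈ u 𝒮 :=
    (of_le (indepFilter 𝒮)).trans (inf_le_right.trans (iInf_le _ W)) (Filter.mem_principal_self _)
  have hu_inj : Function.Injective u := fun 𝒮 𝒮' h => Set.ext fun W => by
    obtain ⟨x, hx, hx'⟩ := Filter.nonempty_of_mem (Filter.inter_mem (hu_mem 𝒮 W) (h ▸ hu_mem 𝒮' W))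
    exact hx.symm.trans hx'
  rw [← Cardinal.mk_set, ← Cardinal.mk_set]
  exact Cardinal.mk_le_of_injective
    (f := fun 𝒮 => ⟨map e (u 𝒮), map_le_cofinite e.injective (hu_free 𝒮)⟩) fun _ _ h =>
      hu_inj (map_injective e.injective (congrArg Subtype.val h))

end Ultrafilter

section CoarseStructures

variable {X : Type*} {B : Set (Set X)}

theorem ballS_subset_union {e : Set (X × X)} {b : Set X} (he : e ⊆ b ×ˢ b ∪ diagS X)
    (a : Set X) : ballS e a ⊆ a ∪ b := by
  rintro y ⟨z, hz, hzy⟩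
  rcases he hzy with h | (h : z = y)
  · exact Or.inr h.2
  · exact Or.inl (h ▸ hz)

theorem IsBornology.downB_subset_upB (hB : IsBornology B) : downB B ⊆ upB B := by
  rintro e ⟨hdiag, b, hb, he⟩
  have he' : invS e ⊆ b ×ˢ b ∪ diagS X := fun p hp => by
    rcases he hp with h | (h : p.2 = p.1)
    · exact Or.inl ⟨h.2, h.1⟩
    · exact Or.inr h.symm
  refine ⟨hdiag, fun a ha => ⟨?_, ?_⟩⟩
  · exact hB.subset_mem _ (hB.union_mem a ha b hb) _ (ballS_subset_union he a)
  · exact hB.subset_mem _ (hB.union_mem a ha b hb) _ (ballS_subset_union he' a)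

/-- If the points moved by `e ∈ upB B` formed an unbounded set, inverting a choice of partners
would give an injection `x` on an unbounded set, with `e` joining each `y` to `x y`; the set `Y`
provided by the hypothesis would then lie near the bounded set `x '' Y`. -/
theorem IsBornology.upB_subset_downB [Nonempty X] (hB : IsBornology B)
    (h : ∀ W ∉ B, ∀ x : X → X, InjOn x W → (∀ y ∈ W, x y ≠ y) → ∃ Y ⊆ W, Y ∉ B ∧ x '' Y ∈ B) :
    upB B ⊆ downB B := by
  rintro e ⟨hdiag, hball⟩
  have hnear : ∀ b ∈ B, ∀ Y : Set X, (∀ y ∈ Y, ∃ z ∈ b, (z, y) ∈ e ∨ (y, z) ∈ e) → Y ∈ B := by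
    refine fun b hb Y hY => hB.subset_mem _ (hB.union_mem _ (hball b hb).1 _ (hball b hb).2) Y ?_
    intro y hy
    obtain ⟨z, hz, hzy | hyz⟩ := hY y hy
    exacts [Or.inl ⟨z, hz, hzy⟩, Or.inr ⟨z, hz, hyz⟩]
  set S := {z | ∃ w, w ≠ z ∧ ((z, w) ∈ e ∨ (w, z) ∈ e)}
  by_cases hS : S ∈ B
  · refine ⟨hdiag, S, hS, fun ⟨a, b⟩ hab => ?_⟩
    by_cases hba : b = a
    · exact Or.inr hba.symm
    · exact Or.inl ⟨⟨b, hba, Or.inl hab⟩, ⟨a, Ne.symm hba, Or.inr hab⟩⟩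
  exfalso
  choose! g hg using fun z (hz : z ∈ S) => hz
  have hW : g '' S ∉ B := fun hW => hS <| hnear _ hW S fun z hz =>
    ⟨g z, mem_image_of_mem g hz, (hg z hz).2.symm⟩
  set x := Function.invFunOn g S
  have hx : ∀ y ∈ g '' S, x y ∈ S ∧ g (x y) = y := fun y hy => Function.invFunOn_pos hy
  have hfix : ∀ y ∈ g '' S, x y ≠ y := fun y hy hxy => by
    have := (hg _ (hx y hy).1).1
    rw [(hx y hy).2, hxy] at this
    exact this rfl
  obtain ⟨Y, hYW, hY, hxY⟩ := h _ hW x (Function.invFunOn_injOn_image g S) hfix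
  refine hY (hnear _ hxY Y fun y hy => ⟨x y, mem_image_of_mem x hy, ?_⟩)
  have := (hg _ (hx y (hYW hy)).1).2
  rwa [(hx y (hYW hy)).2] at this

end CoarseStructures

section BlockComponents

variable {α ι : Type*}

open Classical in
/-- Summands of a representation of `p` as a bind of ultrafilters concentrated on the blocks
`D i`, chosen once and for all (junk when there is no such representation). -/
noncomputable def blockComponents (p : Ultrafilter α) (D : ι → Set α) : ι → Ultrafilter α :=
  if h : ∃ sc : Ultrafilter ι × (ι → Ultrafilter α),
      (∀ᶠ i in sc.1, D i ∈ sc.2 i) ∧ sc.1.bind sc.2 = p then h.choose.2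
  else fun _ => p

theorem eventually_blockComponents_eq {D : ι → Set α} (hD : Pairwise (Disjoint on D))
    {s : Ultrafilter ι} {c : ι → Ultrafilter α} (hc : ∀ᶠ i in s, D i ∈ c i) :
    ∀ᶠ i in s, blockComponents (s.bind c) D i = c i := by
  have h : ∃ sc : Ultrafilter ι × (ι → Ultrafilter α),
      (∀ᶠ i in sc.1, D i ∈ sc.2 i) ∧ sc.1.bind sc.2 = s.bind c := ⟨(s, c), hc, rfl⟩
  rw [blockComponents, dif_pos h]
  obtain ⟨hc', hbind⟩ := h.choose_spec
  obtain ⟨hs, hsc⟩ := Ultrafilter.eq_and_eventually_eq_of_bind_eq hD hc' hc hbind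
  rwa [hs] at hsc

end BlockComponents

namespace MinmaxBornology

/-- The ultrafilters that `p` rules out for the later terms of the construction. -/
def forbidden (p : Ultrafilter ℕ) : Set (Ultrafilter ℕ) :=
  {q | UIso p q} ∪ ⋃ Di : (ℕ → Set ℕ) × ℕ, {q | UIso (blockComponents p Di.1 Di.2) q}

theorem mk_setOf_uIso_le (p : Ultrafilter ℕ) : #{q | UIso p q} ≤ 𝔠 :=
  calc #{q | UIso p q}
      = #(range fun f : Equiv.Perm ℕ => Ultrafilter.map f p) := rfl
    _ ≤ #(Equiv.Perm ℕ) := Cardinal.mk_range_le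
    _ = 𝔠 := by rw [Cardinal.mk_perm_eq_two_power, Cardinal.mk_nat, Cardinal.two_power_aleph0]

theorem mk_forbidden_le (p : Ultrafilter ℕ) : #(forbidden p) ≤ 𝔠 := by
  have hidx : #((ℕ → Set ℕ) × ℕ) = 𝔠 := by
    simp [Cardinal.mk_set, Cardinal.continuum_power_aleph0]
  calc #(forbidden p)
      ≤ 𝔠 + #((ℕ → Set ℕ) × ℕ) *
          ⨆ Di : (ℕ → Set ℕ) × ℕ, #{q | UIso (blockComponents p Di.1 Di.2) q} :=
        (Cardinal.mk_union_le _ _).trans (add_le_add (mk_setOf_uIso_le p) (Cardinal.mk_iUnion_le _))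
    _ ≤ 𝔠 + 𝔠 * 𝔠 := by
        rw [hidx]
        gcongr
        exact ciSup_le' fun _ => mk_setOf_uIso_le _
    _ = 𝔠 := by rw [Cardinal.continuum_mul_self, Cardinal.continuum_add_self]

/-- The inductive step: `2 ^ 𝔠` free ultrafilters contain the infinite set `D`, while countably
many ultrafilters forbid only `𝔠` of them. -/
theorem exists_free_mem_notMem_forbidden {D : Set ℕ} (hD : D.Infinite)
    {P : Set (Ultrafilter ℕ)} (hP : P.Countable) :
    ∃ q : Ultrafilter ℕ, (q : Filter ℕ) ≤ Filter.cofinite ∧ D ∈ q ∧ ∀ p ∈ P, q ∉ forbidden p := by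
  have : Infinite D := hD.to_subtype
  have hgood : (2 : Cardinal) ^ 𝔠 ≤
      #{q : Ultrafilter ℕ | (q : Filter ℕ) ≤ Filter.cofinite ∧ D ∈ q} := by
    have := Ultrafilter.two_power_two_power_le_mk_free D
    rw [Cardinal.mk_eq_aleph0, Cardinal.two_power_aleph0] at this
    have hD (u : Ultrafilter D) : D ∈ Ultrafilter.map Subtype.val u := by
      rw [Ultrafilter.mem_map, Subtype.coe_preimage_self]
      exact Filter.univ_mem
    refine this.trans (Cardinal.mk_le_of_injective (f := fun u => ⟨Ultrafilter.map Subtype.val u.1,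
      Ultrafilter.map_le_cofinite Subtype.val_injective u.2, hD u.1⟩) fun u v h => ?_)
    exact Subtype.val_injective (Ultrafilter.map_injective Subtype.val_injective
      (congrArg Subtype.val h))
  have hbad : #(⋃ p ∈ P, forbidden p) ≤ 𝔠 :=
    calc #(⋃ p ∈ P, forbidden p)
        ≤ #P * ⨆ p : P, #(forbidden p) := Cardinal.mk_biUnion_le _ _
      _ ≤ ℵ₀ * 𝔠 := by
          gcongr
          · exact hP.le_aleph0
          · exact ciSup_le' fun _ => mk_forbidden_le _
      _ = 𝔠 := Cardinal.aleph0_mul_continuum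
  obtain ⟨q, ⟨hfree, hDq⟩, hq⟩ := not_subset.1 fun hsub =>
    (Cardinal.cantor 𝔠).not_ge (hgood.trans ((Cardinal.mk_le_mk_of_subset hsub).trans hbad))
  exact ⟨q, hfree, hDq, fun p hp hqp => hq (mem_biUnion hp hqp)⟩

def block (n : ℕ) : Set ℕ := range (Nat.pair n)

theorem pairwise_disjoint_block : Pairwise (Disjoint on block) := fun _ _ hmn =>
  Set.disjoint_left.2 fun _ ⟨_, ha⟩ ⟨_, hb⟩ => hmn (Nat.pair_eq_pair.1 (ha.trans hb.symm)).1

theorem infinite_block (n : ℕ) : (block n).Infinite :=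
  infinite_range_of_injective fun _ _ h => (Nat.pair_eq_pair.1 h).2

noncomputable def points : ℕ → Ultrafilter ℕ :=
  Nat.lt_wfRel.wf.fix fun n prev => (exists_free_mem_notMem_forbidden (infinite_block n)
    (countable_range fun m : Fin n => prev m m.2)).choose

theorem points_spec (n : ℕ) : (points n : Filter ℕ) ≤ Filter.cofinite ∧ block n ∈ points n ∧
    ∀ m < n, points n ∉ forbidden (points m) := by
  rw [points, WellFounded.fix_eq]
  obtain ⟨hfree, hblock, hforb⟩ := (exists_free_mem_notMem_forbidden (infinite_block n)
    (countable_range fun m : Fin n => points m)).choose_spec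
  exact ⟨hfree, hblock, fun m hm => hforb _ ⟨⟨m, hm⟩, rfl⟩⟩

theorem not_uIso_points {m n : ℕ} (hmn : m ≠ n) : ¬ UIso (points m) (points n) := fun h => by
  rcases hmn.lt_or_gt with hlt | hlt
  · exact (points_spec n).2.2 m hlt (Or.inl h)
  · exact (points_spec m).2.2 n hlt (Or.inl h.symm)

/-- Otherwise `points k` would decompose over the blocks `σ ⁻¹' block n` with summands
isomorphic to `points n`, for `r`-almost all, hence some later, `n`. -/
theorem bind_points_ne_map_perm {r : Ultrafilter ℕ} (hr : (r : Filter ℕ) ≤ Filter.cofinite)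
    (k : ℕ) (σ : Equiv.Perm ℕ) : r.bind points ≠ Ultrafilter.map σ (points k) := by
  intro h
  set D := fun n => σ ⁻¹' block n
  set c := fun n => Ultrafilter.map σ.symm (points n)
  have hD : Pairwise (Disjoint on D) := fun m n hmn => (pairwise_disjoint_block hmn).preimage σ
  have hc : ∀ n, D n ∈ c n := fun n => by
    simpa [D, c, Ultrafilter.mem_map, ← preimage_comp] using (points_spec n).2.1
  have hk : r.bind c = points k := by
    rw [← Ultrafilter.map_bind, h, Ultrafilter.map_map, σ.symm_comp_self, Ultrafilter.map_id]
  have hlate : ∀ᶠ n in r, k < n := hr (by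
    rw [Nat.cofinite_eq_atTop]; exact Filter.eventually_gt_atTop k)
  obtain ⟨n, hn, hkn⟩ := ((eventually_blockComponents_eq hD (.of_forall hc)).and hlate).exists
  rw [hk] at hn
  refine (points_spec n).2.2 k hkn (Or.inr (mem_iUnion.2 ⟨(D, n), σ, ?_⟩))
  rw [hn, Ultrafilter.map_map, σ.self_comp_symm, Ultrafilter.map_id]

def pointsBornology : Set (Set ℕ) := {b | ∀ n, b ∉ points n}

theorem isBornology_pointsBornology : IsBornology pointsBornology where
  cover := eq_univ_of_forall fun a =>
    ⟨{a}, fun n => (points n).compl_mem_iff_notMem.1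
      ((points_spec n).1 (finite_singleton a).compl_mem_cofinite), rfl⟩
  univ_not_mem h := h 0 Filter.univ_mem
  subset_mem _ hb _ hab n ha := hb n (Filter.mem_of_superset ha hab)
  union_mem _ hb _ hc n h := (Ultrafilter.union_mem_iff.1 h).elim (hb n) (hc n)

theorem exists_image_mem_pointsBornology {W : Set ℕ} (hW : W ∉ pointsBornology) {x : ℕ → ℕ}
    (hinj : InjOn x W) (hfix : ∀ y ∈ W, x y ≠ y) :
    ∃ Y ⊆ W, Y ∉ pointsBornology ∧ x '' Y ∈ pointsBornology := by
  obtain ⟨k, hk⟩ : ∃ k, W ∈ points k := by simpa [pointsBornology] using hW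
  suffices ∃ A ∈ Ultrafilter.map x (points k), ∀ n, A ∉ points n by
    obtain ⟨A, hA, hAB⟩ := this
    exact ⟨W ∩ x ⁻¹' A, inter_subset_left, fun hB => hB k (Filter.inter_mem hk hA),
      fun n hn => hAB n (Filter.mem_of_superset hn (image_subset_iff.2 inter_subset_right))⟩
  by_contra! hlim
  obtain ⟨σ, hσ⟩ := Ultrafilter.exists_perm_eventually_eq hk hinj
  have hxσ : Ultrafilter.map x (points k) = Ultrafilter.map σ (points k) :=
    (Ultrafilter.map_congr hσ).symm
  have hne : ∀ n, points n ≠ Ultrafilter.map x (points k) := by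
    intro n hn
    rcases eq_or_ne n k with rfl | hnk
    · exact Ultrafilter.map_ne_self_of_injOn hk hinj hfix hn.symm
    · exact not_uIso_points hnk.symm ⟨σ, (hn.trans hxσ).symm⟩
  obtain ⟨r, hr, hrk⟩ := Ultrafilter.exists_free_bind_eq_of_forall_mem hlim hne
  exact bind_points_ne_map_perm hr k σ (hrk.trans hxσ)

theorem mk_sharp_pointsBornology : #(sharp pointsBornology) = 2 ^ 𝔠 := by
  have hsharp : ∀ r : Ultrafilter ℕ, r.bind points ∈ sharp pointsBornology := fun r b hb =>
    Ultrafilter.mem_bind.2 (Filter.univ_mem' fun n => (points n).compl_mem_iff_notMem.2 (hb n))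
  refine le_antisymm ?_ ?_
  · calc #(sharp pointsBornology) ≤ #(Ultrafilter ℕ) := Cardinal.mk_subtype_le _
      _ ≤ 2 ^ 2 ^ #ℕ := Ultrafilter.mk_le
      _ = 2 ^ 𝔠 := by rw [Cardinal.mk_nat, Cardinal.two_power_aleph0]
  · calc (2 : Cardinal) ^ 𝔠 = 2 ^ 2 ^ #ℕ := by rw [Cardinal.mk_nat, Cardinal.two_power_aleph0]
      _ ≤ #{u : Ultrafilter ℕ // (u : Filter ℕ) ≤ Filter.cofinite} :=
        Ultrafilter.two_power_two_power_le_mk_free ℕ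
      _ ≤ #(Ultrafilter ℕ) := Cardinal.mk_subtype_le _
      _ ≤ #(sharp pointsBornology) := Cardinal.mk_le_of_injective (f := fun r => ⟨_, hsharp r⟩)
        fun _ _ h => Ultrafilter.bind_injective pairwise_disjoint_block
          (fun n => (points_spec n).2.1) (congrArg Subtype.val h)

end MinmaxBornology

theorem stmt12 :
    ∃ B : Set (Set ℕ), IsBornology B ∧ downB B = upB B ∧
      Cardinal.mk (sharp B) = 2 ^ Cardinal.continuum :=
  open MinmaxBornology in
  ⟨pointsBornology, isBornology_pointsBornology,
    isBornology_pointsBornology.downB_subset_upB.antisymm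
      (isBornology_pointsBornology.upB_subset_downB fun _ hW _ =>
        exists_image_mem_pointsBornology hW),
    mk_sharp_pointsBornology⟩
end

section
/- For an infinite set X, let 𝓑 = {A ⊆ X : |A| < |X|}. Then 𝓑 is a bornology on X and the coarse space (X, ↑𝓑) is maximal; moreover every subset L ⊆ X with |L| = |X| is large in (X, ↑𝓑). -/
open Set

open Set

section Helpers

variable {X : Type*}

lemma ballS_mono {e e' : Set (X × X)} {A A' : Set X} (he : e ⊆ e') (hA : A ⊆ A') :
    ballS e A ⊆ ballS e' A' := fun y ⟨x, hx, hxy⟩ => ⟨x, hA hx, he hxy⟩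

lemma ballS_comp (e f : Set (X × X)) (A : Set X) :
    ballS (compS e f) A = ballS f (ballS e A) := by
  ext y
  simp only [ballS, compS, mem_setOf_eq]
  tauto

lemma invS_compS (e f : Set (X × X)) : invS (compS e f) = compS (invS f) (invS e) := by
  ext ⟨a, b⟩
  simp only [invS, compS, mem_setOf_eq]
  tauto

lemma invS_invS (e : Set (X × X)) : invS (invS e) = e := rfl

variable [Infinite X]

lemma sm_subset {A C : Set X} (h : A ⊆ C) (hC : Cardinal.mk C < Cardinal.mk X) :
    Cardinal.mk A < Cardinal.mk X :=
  lt_of_le_of_lt (Cardinal.mk_le_mk_of_subset h) hC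

lemma sm_union {A C : Set X} (hA : Cardinal.mk A < Cardinal.mk X)
    (hC : Cardinal.mk C < Cardinal.mk X) : Cardinal.mk ↥(A ∪ C) < Cardinal.mk X :=
  lt_of_le_of_lt (Cardinal.mk_union_le A C)
    (Cardinal.add_lt_of_lt (Cardinal.aleph0_le_mk X) hA hC)

lemma sm_singleton (x : X) : Cardinal.mk ({x} : Set X) < Cardinal.mk X := by
  simp only [Cardinal.mk_singleton]
  exact lt_of_lt_of_le Cardinal.one_lt_aleph0 (Cardinal.aleph0_le_mk X)

lemma mem_upB_of {e : Set (X × X)} (hd : diagS X ⊆ e)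
    (h1 : ∀ b : Set X, Cardinal.mk b < Cardinal.mk X → Cardinal.mk (ballS e b) < Cardinal.mk X)
    (h2 : ∀ b : Set X, Cardinal.mk b < Cardinal.mk X → Cardinal.mk (ballS (invS e) b) < Cardinal.mk X) :
    e ∈ upB {A : Set X | Cardinal.mk A < Cardinal.mk X} :=
  ⟨hd, fun b hb => ⟨h1 b hb, h2 b hb⟩⟩

/-- Any set of full cardinality is large in `upB`. -/
lemma large_of_mk_eq (L : Set X) (hL : Cardinal.mk L = Cardinal.mk X) :
    IsLarge (upB {A : Set X | Cardinal.mk A < Cardinal.mk X}) L := by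
  have hle : Cardinal.mk (Lᶜ : Set X) ≤ Cardinal.mk L := hL ▸ Cardinal.mk_set_le _
  obtain ⟨j⟩ : Nonempty ((Lᶜ : Set X) ↪ (L : Set X)) := (Cardinal.le_def _ _).mp hle
  classical
  set g : X → X := fun x => if h : x ∈ L then x else (j ⟨x, h⟩ : X) with hg
  have hgL : ∀ x, g x ∈ L ∨ x ∈ L := by
    intro x
    by_cases h : x ∈ L
    · exact Or.inr h
    · left; simp only [hg, dif_neg h]; exact (j ⟨x, h⟩).2
  have hginj : ∀ x x' : X, x ∉ L → x' ∉ L → g x = g x' → x = x' := by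
    intro x x' hx hx' hgg
    simp only [hg, dif_neg hx, dif_neg hx'] at hgg
    have := j.injective (Subtype.coe_injective hgg)
    exact congrArg Subtype.val this
  refine ⟨{p : X × X | p.1 = p.2 ∨ p.1 = g p.2}, ?_, ?_⟩
  · refine mem_upB_of (fun p hp => Or.inl hp) ?_ ?_
    · intro b hb
      refine sm_subset (C := b ∪ (b ∪ {x | x ∉ L ∧ g x ∈ b})) ?_ (sm_union hb (sm_union hb ?_))
      · rintro y ⟨x, hx, h⟩
        have h2 : x = y ∨ x = g y := h; clear h
        rcases h2 with h | h
        · subst h; exact Or.inl hx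
        · by_cases hy : y ∈ L
          · left; simp only [hg, dif_pos hy] at h; subst h; exact hx
          · right; right; exact ⟨hy, h ▸ hx⟩
      · refine lt_of_le_of_lt (Cardinal.mk_le_of_injective (f := fun z : {x | x ∉ L ∧ g x ∈ b} =>
          (⟨g z.1, z.2.2⟩ : b)) ?_) hb
        rintro ⟨x, hx⟩ ⟨x', hx'⟩ h
        exact Subtype.ext (hginj x x' hx.1 hx'.1 (congrArg Subtype.val h))
    · intro b hb
      refine sm_subset (C := b ∪ g '' b) ?_ (sm_union hb (lt_of_le_of_lt Cardinal.mk_image_le hb))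
      rintro y ⟨x, hx, h⟩
      have h2 : y = x ∨ y = g x := h; clear h
      rcases h2 with h | h
      · subst h; exact Or.inl hx
      · exact Or.inr ⟨x, hx, h.symm⟩
  · apply eq_univ_of_forall
    intro y
    by_cases hy : y ∈ L
    · exact ⟨y, hy, Or.inl rfl⟩
    · refine ⟨g y, ?_, Or.inr rfl⟩
      rcases hgL y with h | h
      · exact h
      · exact absurd h hy

end Helpers

section Helpers2
variable {X : Type*} [Infinite X]

lemma sm_insert (x : X) {b : Set X} (hb : Cardinal.mk b < Cardinal.mk X) :
    Cardinal.mk (insert x b : Set X) < Cardinal.mk X := by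
  rw [Set.insert_eq]; exact sm_union (sm_singleton x) hb

lemma square_mem_upB {S : Set X} (hS : Cardinal.mk S < Cardinal.mk X) :
    diagS X ∪ S ×ˢ S ∈ upB {A : Set X | Cardinal.mk A < Cardinal.mk X} := by
  refine mem_upB_of subset_union_left ?_ ?_
  · intro b hb
    refine sm_subset (C := b ∪ S) ?_ (sm_union hb hS)
    rintro y ⟨x, hx, (h | h)⟩
    · left; have h2 : x = y := h; rwa [h2] at hx
    · exact Or.inr h.2
  · intro b hb
    refine sm_subset (C := b ∪ S) ?_ (sm_union hb hS)
    rintro y ⟨x, hx, (h | h)⟩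
    · left; have h2 : y = x := h; rw [h2]; exact hx
    · exact Or.inr h.1

lemma upB_coarse : IsCoarse (upB {A : Set X | Cardinal.mk A < Cardinal.mk X}) := by
  constructor
  · exact fun e he => he.1
  · intro e he f hf
    refine mem_upB_of ?_ ?_ ?_
    · intro p hp
      exact ⟨p.1, he.1 (show (p.1, p.1) ∈ diagS X from rfl), hf.1 hp⟩
    · intro b hb
      rw [ballS_comp]
      exact (hf.2 _ (he.2 b hb).1).1
    · intro b hb
      rw [invS_compS, ballS_comp]
      exact (he.2 _ (hf.2 b hb).2).2
  · intro e he
    refine mem_upB_of ?_ ?_ ?_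
    · intro p hp
      exact he.1 (show (p.2, p.1) ∈ diagS X from (show p.1 = p.2 from hp).symm)
    · intro b hb; exact (he.2 b hb).2
    · intro b hb; rw [invS_invS]; exact (he.2 b hb).1
  · intro e he f hdf hfe
    refine mem_upB_of hdf ?_ ?_
    · intro b hb
      exact sm_subset (ballS_mono hfe (subset_refl b)) (he.2 b hb).1
    · intro b hb
      exact sm_subset (ballS_mono (fun p (hp : (p.2, p.1) ∈ f) => show (p.2, p.1) ∈ e from hfe hp) (subset_refl b)) (he.2 b hb).2
  · apply eq_univ_of_forall
    intro p
    rw [mem_sUnion]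
    refine ⟨diagS X ∪ ({p.1, p.2} : Set X) ×ˢ ({p.1, p.2} : Set X), ?_, ?_⟩
    · refine square_mem_upB ?_
      rw [show ({p.1, p.2} : Set X) = insert p.1 {p.2} from rfl]
      exact sm_insert p.1 (sm_singleton p.2)
    · exact Or.inr ⟨Or.inl rfl, Or.inr rfl⟩

end Helpers2

theorem stmt17 {X : Type*} [Infinite X] :
    IsBornology {A : Set X | Cardinal.mk A < Cardinal.mk X} ∧
    IsMaximalCoarse (upB {A : Set X | Cardinal.mk A < Cardinal.mk X}) ∧
    ∀ L : Set X, Cardinal.mk L = Cardinal.mk X →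
      IsLarge (upB {A : Set X | Cardinal.mk A < Cardinal.mk X}) L := by
  classical
  refine ⟨?_, ⟨upB_coarse, ?_, ?_⟩, fun L hL => large_of_mk_eq L hL⟩
  · constructor
    · apply eq_univ_of_forall
      intro x
      exact ⟨{x}, sm_singleton x, rfl⟩
    · intro h
      simp only [mem_setOf_eq, Cardinal.mk_univ] at h
      exact lt_irrefl _ h
    · intro b hb a ha
      exact sm_subset ha hb
    · intro b hb c hc
      exact sm_union hb hc
  · rintro ⟨e, he, x, hx⟩
    have h1 : ballS e {x} = univ := eq_univ_of_univ_subset hx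
    have h2 := (he.2 {x} (sm_singleton x)).1
    rw [h1] at h2
    simp only [mem_setOf_eq, Cardinal.mk_univ] at h2
    exact lt_irrefl _ h2
  · intro E' hE' hsub
    have hsubset : upB {A : Set X | Cardinal.mk A < Cardinal.mk X} ⊆ E' := hsub.1
    obtain ⟨e, heE', heup⟩ := Set.exists_of_ssubset hsub
    have hde : diagS X ⊆ e := hE'.diag_sub e heE'
    have hex : ∃ b : Set X, Cardinal.mk b < Cardinal.mk X ∧
        ¬(Cardinal.mk (ballS e b) < Cardinal.mk X ∧
          Cardinal.mk (ballS (invS e) b) < Cardinal.mk X) := by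
      by_contra hc
      push_neg at hc
      exact heup ⟨hde, fun b hb => hc b hb⟩
    obtain ⟨b, hb, hnb⟩ := hex
    obtain ⟨e'', he''E', hLnB⟩ : ∃ e'' ∈ E', ¬ Cardinal.mk (ballS e'' b) < Cardinal.mk X := by
      rcases not_and_or.mp hnb with h | h
      · exact ⟨e, heE', h⟩
      · exact ⟨invS e, hE'.inv_mem e heE', h⟩
    have hLmk : Cardinal.mk (ballS e'' b) = Cardinal.mk X :=
      le_antisymm (Cardinal.mk_set_le _) (not_lt.mp hLnB)
    obtain ⟨eL, heL, hLball⟩ := large_of_mk_eq (ballS e'' b) hLmk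
    obtain ⟨x0⟩ : Nonempty X := inferInstance
    set eb : Set (X × X) := diagS X ∪ (insert x0 b) ×ˢ (insert x0 b) with heb
    have hebup : eb ∈ upB {A : Set X | Cardinal.mk A < Cardinal.mk X} :=
      square_mem_upB (sm_insert x0 hb)
    have hbball : b ⊆ ballS eb {x0} := by
      intro y hy
      exact ⟨x0, rfl, Or.inr ⟨Or.inl rfl, Or.inr hy⟩⟩
    refine ⟨compS eb (compS e'' eL),
      hE'.comp_mem eb (hsubset hebup) (compS e'' eL)
        (hE'.comp_mem e'' he''E' eL (hsubset heL)), x0, ?_⟩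
    rw [ballS_comp, ballS_comp]
    have h1 : univ ⊆ ballS eL (ballS e'' b) := hLball.ge
    exact h1.trans (ballS_mono (subset_refl eL)
      (ballS_mono (subset_refl e'') hbball))
end
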